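/- (Testing/Carleson condition for the counterexample) Fix ε ∈ (0,1) and let (W_I)_{I∈𝒟}, (b_I)_{I∈𝒟} be as in the construction, and for I ∈ 𝒟^n set A_I = |I| ε^{-2(n+1)} b_I b_I^T. Then for every K ∈ 𝒟 with |K| = 2^{-n₀} and every e ∈ ℝ²: Σ_{I∈𝒟(K)} |A_I^{1/2} W_I e|²_{ℝ²} = Σ_{I∈𝒟(K)} |I| (β_{n(I)} ε^{-(n(I)+1)})² ⟨e, b_I⟩²_{ℝ²} ≤ (1-ε²)^{-2} |K| ⟨W_K e, e⟩_{ℝ²}, where n(I) is defined by |I| = 2^{-n(I)}. Equivalently, (1/|K|) Σ_{I∈𝒟(K)} W_I A_I W_I ≤ (1-ε²)^{-2} W_K as quadratic forms. -/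

import Mathlib

open MeasureTheory Set
open scoped ENNReal Matrix Pointwise Classical

noncomputable section

/-- The unit interval `I₀ = [0,1)`. -/
def I0 : Set ℝ := Set.Ico (0 : ℝ) 1

/-- The dyadic interval `[k/2^n, (k+1)/2^n)`. -/
def dyad (n k : ℕ) : Set ℝ := Set.Ico ((k : ℝ) / 2 ^ n) (((k : ℝ) + 1) / 2 ^ n)

/-- Real `d × d` matrices. -/
abbrev Mat (d : ℕ) := Matrix (Fin d) (Fin d) ℝ

/-- The Euclidean norm `|v|_{ℝ^d}`. -/
def enorm2 {d : ℕ} (v : Fin d → ℝ) : ℝ := Real.sqrt (∑ i, v i ^ 2)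

/-- The Euclidean inner product `⟨v, w⟩_{ℝ^d}`. -/
def dotp {d : ℕ} (v w : Fin d → ℝ) : ℝ := ∑ i, v i * w i

open scoped Classical in
/-- The positive semidefinite square root of a positive semidefinite matrix
(junk value `0` if the matrix is not positive semidefinite). -/
def matSqrt {d : ℕ} (A : Mat d) : Mat d := if h : A.PosSemidef then
    (h.1.eigenvectorUnitary : Mat d) * Matrix.diagonal (Real.sqrt ∘ h.1.eigenvalues) *
      (star h.1.eigenvectorUnitary : Mat d) else 0

/-- Order in the sense of quadratic forms: `A ⩽ B` iff `B - A` is positive semidefinite. -/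
def matLE {d : ℕ} (A B : Mat d) : Prop := (B - A).PosSemidef

/-- The average `⟨g⟩_I = |I|⁻¹ ∫_I g` of a (scalar- or vector-valued) function. -/
def avgOn {E : Type*} [NormedAddCommGroup E] [NormedSpace ℝ E] (I : Set ℝ) (g : ℝ → E) : E :=
  (volume I).toReal⁻¹ • ∫ x in I, g x

/-- The entrywise average `⟨W⟩_I` of a matrix-valued function. -/
def avgMat {d : ℕ} (I : Set ℝ) (W : ℝ → Mat d) : Mat d :=
  Matrix.of fun i j => avgOn I fun x => W x i j

/-- A matrix weight on `I₀`: an integrable function with symmetric values,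
positive definite a.e. on `I₀`. -/
structure IsMatrixWeight (d : ℕ) (W : ℝ → Mat d) : Prop where
  intOn : ∀ i j, IntegrableOn (fun x => W x i j) I0
  symm : ∀ x, (W x).IsSymm
  posdef : ∀ᵐ x ∂(volume.restrict I0), (W x).PosDef

/-- Membership in `L²_W(ℝ^d)`. -/
def MemL2W {d : ℕ} (W : ℝ → Mat d) (f : ℝ → Fin d → ℝ) : Prop :=
  Measurable f ∧ IntegrableOn (fun x => dotp (W x *ᵥ f x) (f x)) I0

/-- The squared norm `‖f‖²_{L²_W} = ∫_{I₀} ⟨W(x) f(x), f(x)⟩ dx`. -/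
def l2normSq {d : ℕ} (W : ℝ → Mat d) (f : ℝ → Fin d → ℝ) : ℝ :=
  ∫ x in I0, dotp (W x *ᵥ f x) (f x)

/-- The average `⟨φ W f⟩_I = |I|⁻¹ ∫_I φ(y) W(y) f(y) dy`. -/
def avgPhiWf {d : ℕ} (I : Set ℝ) (φ : ℝ → ℝ) (W : ℝ → Mat d) (f : ℝ → Fin d → ℝ) :
    Fin d → ℝ :=
  avgOn I fun y => φ y • (W y *ᵥ f y)

/-- Admissible functions `φ : I → [-1,1]`, measurable. -/
def Adm (I : Set ℝ) (φ : ℝ → ℝ) : Prop :=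
  Measurable φ ∧ ∀ y ∈ I, φ y ∈ Set.Icc (-1 : ℝ) 1

/-- The eigenvalue `α_n = 1/(1+ε^{2n+2})`. -/
def alphaC (ε : ℝ) (n : ℕ) : ℝ := 1 / (1 + ε ^ (2 * n + 2))

/-- The eigenvalue `β_n = ε^{2n+2}/(1+ε^{2n+2})`. -/
def betaC (ε : ℝ) (n : ℕ) : ℝ := ε ^ (2 * n + 2) / (1 + ε ^ (2 * n + 2))

/-- The rotation parameter `δ_n = (ε^{2n}(1-ε²)/(1-ε^{4n+2}))^{1/2}`. -/
def deltaC (ε : ℝ) (n : ℕ) : ℝ :=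
  Real.sqrt (ε ^ (2 * n) * (1 - ε ^ 2) / (1 - ε ^ (4 * n + 2)))

/-- The rotation angle `γ_n = arctan δ_n`. -/
def gammaC (ε : ℝ) (n : ℕ) : ℝ := Real.arctan (deltaC ε n)

/-- The orthonormal pairs `(a_I, b_I)` indexed by dyadic intervals `I = dyad n k`:
`a_{I₀} = (1,0)`, `b_{I₀} = (0,1)`, and for `I ∈ 𝒟^n`,
`a_{I±} = (cos γ_{n+1}) a_I ± (sin γ_{n+1}) b_I`,
`b_{I±} = (cos γ_{n+1}) b_I ∓ (sin γ_{n+1}) a_I`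
(the right child of `dyad n k` is `dyad (n+1) (2k+1)`, the left one `dyad (n+1) (2k)`). -/
def abC (ε : ℝ) : ℕ → ℕ → (Fin 2 → ℝ) × (Fin 2 → ℝ)
  | 0, _ => (![1, 0], ![0, 1])
  | n + 1, k =>
    let p := abC ε n (k / 2)
    let γ := gammaC ε (n + 1)
    if k % 2 = 1 then
      (Real.cos γ • p.1 + Real.sin γ • p.2, Real.cos γ • p.2 - Real.sin γ • p.1)
    else
      (Real.cos γ • p.1 - Real.sin γ • p.2, Real.cos γ • p.2 + Real.sin γ • p.1)

/-- The eigenvector `a_I` for `I = dyad n k`. -/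
def aC (ε : ℝ) (n k : ℕ) : Fin 2 → ℝ := (abC ε n k).1

/-- The eigenvector `b_I` for `I = dyad n k`. -/
def bC (ε : ℝ) (n k : ℕ) : Fin 2 → ℝ := (abC ε n k).2

/-- The average `W_I = α_n a_I a_Iᵀ + β_n b_I b_Iᵀ` for `I = dyad n k`. -/
def WC (ε : ℝ) (n k : ℕ) : Mat 2 :=
  alphaC ε n • Matrix.vecMulVec (aC ε n k) (aC ε n k) +
    betaC ε n • Matrix.vecMulVec (bC ε n k) (bC ε n k)

/-- The Carleson matrices `A_I = |I| ε^{-2(n+1)} b_I b_Iᵀ` for `I = dyad n k`. -/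
def AC (ε : ℝ) (n k : ℕ) : Mat 2 :=
  (((2 : ℝ) ^ n)⁻¹ * ((ε ^ (n + 1))⁻¹) ^ 2) • Matrix.vecMulVec (bC ε n k) (bC ε n k)

/-!
Since `A_I` is a multiple of `b_I b_Iᵀ` and `b_I` is an eigenvector of `W_I` for the eigenvalue
`β_n`, the term of `I ∈ 𝒟^n` is `|I| β_n² ε^{-2(n+1)} ⟨e, b_I⟩²`, which is at most
`|I| ε^{2n+2} |e|²` because `β_n ≤ ε^{2n+2}`. The `2^{n-n₀}` intervals of `𝒟^n` inside `K` thus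
contribute at most `|K| ε^{2n+2} |e|²`, and the geometric series over `n ≥ n₀` sums to
`|K| ε^{2n₀+2} |e|² / (1 - ε²)`. Finally `α_{n₀} ≥ β_{n₀} ≥ (1 - ε²) ε^{2n₀+2}`, so
`⟨W_K e, e⟩ ≥ β_{n₀} |e|² ≥ (1 - ε²) ε^{2n₀+2} |e|²`.
-/

open Matrix

theorem dotp_eq_dotProduct {d : ℕ} (v w : Fin d → ℝ) : dotp v w = v ⬝ᵥ w := rfl

theorem enorm2_sq {d : ℕ} (v : Fin d → ℝ) : enorm2 v ^ 2 = v ⬝ᵥ v := by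
  rw [enorm2, Real.sq_sqrt (Finset.sum_nonneg fun i _ => sq_nonneg (v i))]
  simp only [dotProduct, sq]

theorem matSqrt_transpose_mul_self {d : ℕ} {A : Mat d} (hA : A.PosSemidef) :
    (matSqrt A)ᵀ * matSqrt A = A := by
  set U : Mat d := (hA.1.eigenvectorUnitary : Mat d)
  set D : Mat d := Matrix.diagonal (Real.sqrt ∘ hA.1.eigenvalues)
  have hS : matSqrt A = U * D * star U := by rw [matSqrt, dif_pos hA]
  have hUU : star U * U = 1 := Unitary.coe_star_mul_self _
  have hDD : D * D = Matrix.diagonal (RCLike.ofReal ∘ hA.1.eigenvalues) := by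
    rw [Matrix.diagonal_mul_diagonal]
    congr 1
    funext i
    simp [Real.mul_self_sqrt (hA.eigenvalues_nonneg i)]
  have hsymm : (matSqrt A)ᵀ = matSqrt A := by
    rw [← conjTranspose_eq_transpose_of_trivial, hS]
    simp [D, Matrix.mul_assoc, star_eq_conjTranspose]
  rw [hsymm, hS]
  conv_rhs => rw [hA.1.spectral_theorem, Unitary.conjStarAlgAut_apply, ← hDD]
  simp only [Matrix.mul_assoc]
  rw [← Matrix.mul_assoc (star U) U, hUU, Matrix.one_mul]

theorem enorm2_matSqrt_mulVec_sq {d : ℕ} {A : Mat d} (hA : A.PosSemidef) (v : Fin d → ℝ) :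
    enorm2 (matSqrt A *ᵥ v) ^ 2 = (A *ᵥ v) ⬝ᵥ v := by
  rw [enorm2_sq, dotProduct_mulVec, ← mulVec_transpose, mulVec_mulVec,
    matSqrt_transpose_mul_self hA]

structure IsOrthonormalPair {ι R : Type*} [Fintype ι] [CommRing R] (u v : ι → R) : Prop where
  self_left : u ⬝ᵥ u = 1
  self_right : v ⬝ᵥ v = 1
  orthogonal : u ⬝ᵥ v = 0

theorem IsOrthonormalPair.rotate {ι R : Type*} [Fintype ι] [CommRing R] {u v : ι → R}
    (h : IsOrthonormalPair u v) {c s : R} (hcs : c ^ 2 + s ^ 2 = 1) :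
    IsOrthonormalPair (c • u + s • v) (c • v - s • u) := by
  have hvu : v ⬝ᵥ u = 0 := by rw [dotProduct_comm, h.orthogonal]
  constructor <;>
    simp only [add_dotProduct, sub_dotProduct, dotProduct_add, dotProduct_sub, smul_dotProduct,
      dotProduct_smul, h.self_left, h.self_right, h.orthogonal, hvu, smul_eq_mul]
  · linear_combination hcs
  · linear_combination hcs
  · ring

theorem IsOrthonormalPair.sq_add_sq {a b : Fin 2 → ℝ} (h : IsOrthonormalPair a b)
    (e : Fin 2 → ℝ) : (a ⬝ᵥ e) ^ 2 + (b ⬝ᵥ e) ^ 2 = e ⬝ᵥ e := by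
  set M : Mat 2 := Matrix.of ![a, b]
  have hM : M * Mᵀ = 1 := by
    have hba : b ⬝ᵥ a = 0 := by rw [dotProduct_comm, h.orthogonal]
    ext i j
    fin_cases i <;> fin_cases j
    exacts [h.self_left, h.orthogonal, hba, h.self_right]
  calc (a ⬝ᵥ e) ^ 2 + (b ⬝ᵥ e) ^ 2 = M *ᵥ e ⬝ᵥ M *ᵥ e := by
        simp [M, Fin.sum_univ_two, dotProduct, mulVec, sq]
    _ = (Mᵀ * M) *ᵥ e ⬝ᵥ e := by rw [dotProduct_mulVec, ← mulVec_transpose, mulVec_mulVec]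
    _ = e ⬝ᵥ e := by rw [mul_eq_one_comm.1 hM, one_mulVec]

theorem isOrthonormalPair_aC_bC (ε : ℝ) (n k : ℕ) : IsOrthonormalPair (aC ε n k) (bC ε n k) := by
  induction n generalizing k with
  | zero => constructor <;> simp [aC, bC, abC, dotProduct, Fin.sum_univ_two]
  | succ n ih =>
    have hcs := Real.cos_sq_add_sin_sq (gammaC ε (n + 1))
    simp only [aC, bC] at ih ⊢
    simp only [abC]
    split_ifs
    · exact (ih (k / 2)).rotate hcs
    · simpa only [neg_smul, sub_neg_eq_add, ← sub_eq_add_neg] using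
        (ih (k / 2)).rotate (s := -Real.sin (gammaC ε (n + 1))) (by rwa [neg_sq])

theorem vecMulVec_self_mulVec {d : ℕ} (u x : Fin d → ℝ) : vecMulVec u u *ᵥ x = (u ⬝ᵥ x) • u := by
  rw [vecMulVec_mulVec, op_smul_eq_smul]

theorem WC_mulVec (ε : ℝ) (n k : ℕ) (e : Fin 2 → ℝ) :
    WC ε n k *ᵥ e = (alphaC ε n * (aC ε n k ⬝ᵥ e)) • aC ε n k +
      (betaC ε n * (bC ε n k ⬝ᵥ e)) • bC ε n k := by
  rw [WC, add_mulVec, smul_mulVec, smul_mulVec, vecMulVec_self_mulVec, vecMulVec_self_mulVec,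
    smul_smul, smul_smul]

theorem WC_mulVec_dotProduct (ε : ℝ) (n k : ℕ) (e : Fin 2 → ℝ) :
    WC ε n k *ᵥ e ⬝ᵥ e = alphaC ε n * (aC ε n k ⬝ᵥ e) ^ 2 + betaC ε n * (bC ε n k ⬝ᵥ e) ^ 2 := by
  rw [WC_mulVec, add_dotProduct, smul_dotProduct, smul_dotProduct, smul_eq_mul, smul_eq_mul]
  ring

theorem bC_dotProduct_WC_mulVec (ε : ℝ) (n k : ℕ) (e : Fin 2 → ℝ) :
    bC ε n k ⬝ᵥ WC ε n k *ᵥ e = betaC ε n * (bC ε n k ⬝ᵥ e) := by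
  have h := isOrthonormalPair_aC_bC ε n k
  rw [WC_mulVec, dotProduct_add, dotProduct_smul, dotProduct_smul,
    dotProduct_comm (bC ε n k) (aC ε n k), h.orthogonal, h.self_right, smul_eq_mul, smul_eq_mul]
  ring

theorem AC_posSemidef (ε : ℝ) (n k : ℕ) : (AC ε n k).PosSemidef :=
  (posSemidef_vecMulVec_self_star (bC ε n k)).smul (by positivity)

theorem enorm2_matSqrt_AC_mulVec_WC_sq (ε : ℝ) (n k : ℕ) (e : Fin 2 → ℝ) :
    enorm2 (matSqrt (AC ε n k) *ᵥ (WC ε n k *ᵥ e)) ^ 2 =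
      ((2 : ℝ) ^ n)⁻¹ * (betaC ε n * (ε ^ (n + 1))⁻¹) ^ 2 * (e ⬝ᵥ bC ε n k) ^ 2 := by
  rw [enorm2_matSqrt_mulVec_sq (AC_posSemidef ε n k), AC, smul_mulVec, vecMulVec_self_mulVec,
    smul_dotProduct, smul_dotProduct, bC_dotProduct_WC_mulVec, dotProduct_comm e, smul_eq_mul,
    smul_eq_mul]
  ring

theorem pow_two_mul_add_two_nonneg (ε : ℝ) (n : ℕ) : 0 ≤ ε ^ (2 * n + 2) := by
  rw [pow_add, pow_mul]
  positivity

theorem betaC_nonneg (ε : ℝ) (n : ℕ) : 0 ≤ betaC ε n := by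
  have hx := pow_two_mul_add_two_nonneg ε n
  unfold betaC
  positivity

theorem betaC_le_pow (ε : ℝ) (n : ℕ) : betaC ε n ≤ ε ^ (2 * n + 2) := by
  have hx := pow_two_mul_add_two_nonneg ε n
  rw [betaC, div_le_iff₀ (by positivity)]
  nlinarith

theorem sq_betaC_mul_inv_pow_le (ε : ℝ) (n : ℕ) :
    (betaC ε n * (ε ^ (n + 1))⁻¹) ^ 2 ≤ ε ^ (2 * n + 2) := by
  rcases eq_or_ne ε 0 with rfl | hε
  · simp
  have hpow : ε ^ (2 * n + 2) = (ε ^ (n + 1)) ^ 2 := by ring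
  have hβ := betaC_nonneg ε n
  calc (betaC ε n * (ε ^ (n + 1))⁻¹) ^ 2 = betaC ε n ^ 2 * ((ε ^ (n + 1))⁻¹) ^ 2 := mul_pow ..
    _ ≤ ((ε ^ (n + 1)) ^ 2) ^ 2 * ((ε ^ (n + 1))⁻¹) ^ 2 := by
      rw [← hpow]
      gcongr
      exact betaC_le_pow ε n
    _ = ε ^ (2 * n + 2) := by
      rw [hpow]
      field_simp

theorem pow_two_mul_add_two_le_one {ε : ℝ} (hε : ε ^ 2 ≤ 1) (n : ℕ) : ε ^ (2 * n + 2) ≤ 1 := by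
  rw [show 2 * n + 2 = 2 * (n + 1) by ring, pow_mul]
  exact pow_le_one₀ (sq_nonneg ε) hε

theorem betaC_le_alphaC {ε : ℝ} (hε : ε ^ 2 ≤ 1) (n : ℕ) : betaC ε n ≤ alphaC ε n := by
  have hx := pow_two_mul_add_two_nonneg ε n
  rw [betaC, alphaC]
  gcongr
  exact pow_two_mul_add_two_le_one hε n

theorem one_sub_sq_mul_pow_le_betaC {ε : ℝ} (hε : ε ^ 2 ≤ 1) (n : ℕ) :
    (1 - ε ^ 2) * ε ^ (2 * n + 2) ≤ betaC ε n := by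
  have hx := pow_two_mul_add_two_nonneg ε n
  have hxε : ε ^ (2 * n + 2) ≤ ε ^ 2 := by
    rw [pow_add, pow_mul]
    exact mul_le_of_le_one_left (sq_nonneg ε) (pow_le_one₀ (sq_nonneg ε) hε)
  rw [betaC, le_div_iff₀ (by positivity)]
  nlinarith [mul_nonneg hx (sub_nonneg.2 hxε), mul_nonneg hx (mul_nonneg hx (sq_nonneg ε))]

theorem betaC_mul_dotProduct_self_le {ε : ℝ} (hε : ε ^ 2 ≤ 1) (n k : ℕ) (e : Fin 2 → ℝ) :
    betaC ε n * (e ⬝ᵥ e) ≤ WC ε n k *ᵥ e ⬝ᵥ e := by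
  rw [WC_mulVec_dotProduct, ← (isOrthonormalPair_aC_bC ε n k).sq_add_sq e]
  nlinarith [betaC_le_alphaC hε n, sq_nonneg (aC ε n k ⬝ᵥ e)]

theorem exists_add_of_dyad_subset_dyad {n k n₀ k₀ : ℕ} (h : dyad n k ⊆ dyad n₀ k₀) :
    ∃ m, n = n₀ + m ∧ k₀ * 2 ^ m ≤ k ∧ k < (k₀ + 1) * 2 ^ m := by
  rw [dyad, dyad, Set.Ico_subset_Ico_iff (by gcongr; linarith)] at h
  obtain ⟨hl, hr⟩ := h
  have hlen : ((2 : ℝ) ^ n)⁻¹ ≤ ((2 : ℝ) ^ n₀)⁻¹ := by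
    have hI : ((k : ℝ) + 1) / 2 ^ n - k / 2 ^ n = ((2 : ℝ) ^ n)⁻¹ := by field_simp; ring
    have hK : ((k₀ : ℝ) + 1) / 2 ^ n₀ - k₀ / 2 ^ n₀ = ((2 : ℝ) ^ n₀)⁻¹ := by field_simp; ring
    linarith
  rw [inv_le_inv₀ (by positivity) (by positivity), pow_le_pow_iff_right₀ one_lt_two] at hlen
  obtain ⟨m, rfl⟩ := Nat.exists_eq_add_of_le hlen
  rw [pow_add] at hl hr
  field_simp at hl hr
  refine ⟨m, rfl, by exact_mod_cast hl, ?_⟩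
  have : ((k + 1 : ℕ) : ℝ) ≤ ((k₀ + 1) * 2 ^ m : ℕ) := by push_cast; linarith
  exact_mod_cast this

theorem tsum_ite_dyad_subset_le (n₀ k₀ : ℕ) (g : ℕ → ℝ≥0∞) :
    ∑' p : ℕ × ℕ, (if p.2 < 2 ^ p.1 ∧ dyad p.1 p.2 ⊆ dyad n₀ k₀ then g p.1 else 0) ≤
      ∑' m, 2 ^ m * g (n₀ + m) := by
  set F : ℕ → ℕ → ℝ≥0∞ := fun n k => if k < 2 ^ n ∧ dyad n k ⊆ dyad n₀ k₀ then g n else 0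
  have hsupp : Function.support (fun n => ∑' k, F n k) ⊆ Set.range (n₀ + ·) := by
    intro n hn
    obtain ⟨k, hk⟩ := not_forall.1 (mt ENNReal.tsum_eq_zero.2 hn)
    obtain ⟨m, rfl, -⟩ := exists_add_of_dyad_subset_dyad (ite_ne_right_iff.1 hk).1.2
    exact ⟨m, rfl⟩
  have hlevel (m : ℕ) : ∑' k, F (n₀ + m) k ≤ 2 ^ m * g (n₀ + m) := by
    set s := Finset.Ico (k₀ * 2 ^ m) ((k₀ + 1) * 2 ^ m)
    calc ∑' k, F (n₀ + m) k ≤ ∑' k, if k ∈ s then g (n₀ + m) else 0 := by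
          refine ENNReal.tsum_le_tsum fun k => ?_
          dsimp only [F]
          by_cases hsub : k < 2 ^ (n₀ + m) ∧ dyad (n₀ + m) k ⊆ dyad n₀ k₀
          · obtain ⟨m', hm', hk⟩ := exists_add_of_dyad_subset_dyad hsub.2
            obtain rfl : m = m' := by omega
            rw [if_pos hsub, if_pos (Finset.mem_Ico.2 hk)]
          · rw [if_neg hsub]
            exact zero_le
      _ = 2 ^ m * g (n₀ + m) := by
          rw [tsum_eq_sum (s := s) fun k hk => if_neg hk, Finset.sum_ite_mem, Finset.inter_self,
            Finset.sum_const, Nat.card_Ico, ← Nat.sub_mul, add_tsub_cancel_left, one_mul,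
            nsmul_eq_mul, Nat.cast_pow, Nat.cast_ofNat]
  calc ∑' p : ℕ × ℕ, F p.1 p.2 = ∑' n, ∑' k, F n k := ENNReal.tsum_prod'
    _ = ∑' m, ∑' k, F (n₀ + m) k := ((add_right_injective n₀).tsum_eq hsupp).symm
    _ ≤ ∑' m, 2 ^ m * g (n₀ + m) := ENNReal.tsum_le_tsum hlevel

theorem tsum_two_pow_mul_ofReal_geometric {r c : ℝ} (hr0 : 0 ≤ r) (hr1 : r < 1) (hc : 0 ≤ c)
    (n₀ : ℕ) :
    ∑' m : ℕ, 2 ^ m * ENNReal.ofReal (((2 : ℝ) ^ (n₀ + m))⁻¹ * r ^ (n₀ + m) * c) =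
      ENNReal.ofReal (((2 : ℝ) ^ n₀)⁻¹ * r ^ n₀ * c * (1 - r)⁻¹) := by
  have hterm (m : ℕ) : 2 ^ m * ENNReal.ofReal (((2 : ℝ) ^ (n₀ + m))⁻¹ * r ^ (n₀ + m) * c) =
      ENNReal.ofReal (((2 : ℝ) ^ n₀)⁻¹ * r ^ n₀ * c * r ^ m) := by
    rw [← ENNReal.ofReal_ofNat 2, ← ENNReal.ofReal_pow zero_le_two,
      ← ENNReal.ofReal_mul (by positivity)]
    congr 1
    field_simp
    ring
  rw [tsum_congr hterm, ← ENNReal.ofReal_tsum_of_nonneg (fun m => by positivity)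
      ((summable_geometric_of_lt_one hr0 hr1).mul_left _), tsum_mul_left,
    tsum_geometric_of_lt_one hr0 hr1]

theorem testing_term_le (ε : ℝ) (n k : ℕ) (e : Fin 2 → ℝ) :
    ((2 : ℝ) ^ n)⁻¹ * (betaC ε n * (ε ^ (n + 1))⁻¹) ^ 2 * (e ⬝ᵥ bC ε n k) ^ 2 ≤
      ((2 : ℝ) ^ n)⁻¹ * (ε ^ 2) ^ n * (ε ^ 2 * (e ⬝ᵥ e)) := by
  have hb : (e ⬝ᵥ bC ε n k) ^ 2 ≤ e ⬝ᵥ e := by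
    rw [← (isOrthonormalPair_aC_bC ε n k).sq_add_sq e, dotProduct_comm e]
    exact le_add_of_nonneg_left (sq_nonneg _)
  calc ((2 : ℝ) ^ n)⁻¹ * (betaC ε n * (ε ^ (n + 1))⁻¹) ^ 2 * (e ⬝ᵥ bC ε n k) ^ 2
      ≤ ((2 : ℝ) ^ n)⁻¹ * ε ^ (2 * n + 2) * (e ⬝ᵥ e) := by
        gcongr
        · exact mul_nonneg (by positivity) (pow_two_mul_add_two_nonneg ε n)
        · exact sq_betaC_mul_inv_pow_le ε n
    _ = ((2 : ℝ) ^ n)⁻¹ * (ε ^ 2) ^ n * (ε ^ 2 * (e ⬝ᵥ e)) := by ring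

theorem geometric_bound_le_WC {ε : ℝ} (hε : ε ^ 2 < 1) (n k : ℕ) (e : Fin 2 → ℝ) :
    ((2 : ℝ) ^ n)⁻¹ * (ε ^ 2) ^ n * (ε ^ 2 * (e ⬝ᵥ e)) * (1 - ε ^ 2)⁻¹ ≤
      ((1 - ε ^ 2)⁻¹) ^ 2 * ((2 : ℝ) ^ n)⁻¹ * (WC ε n k *ᵥ e ⬝ᵥ e) := by
  have hD : 0 < 1 - ε ^ 2 := by linarith
  have he : 0 ≤ e ⬝ᵥ e := by simpa using dotProduct_self_star_nonneg e
  calc ((2 : ℝ) ^ n)⁻¹ * (ε ^ 2) ^ n * (ε ^ 2 * (e ⬝ᵥ e)) * (1 - ε ^ 2)⁻¹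
      = ((1 - ε ^ 2)⁻¹) ^ 2 * ((2 : ℝ) ^ n)⁻¹ * ((1 - ε ^ 2) * ε ^ (2 * n + 2) * (e ⬝ᵥ e)) := by
        field_simp
        ring
    _ ≤ ((1 - ε ^ 2)⁻¹) ^ 2 * ((2 : ℝ) ^ n)⁻¹ * (betaC ε n * (e ⬝ᵥ e)) := by
        gcongr
        exact one_sub_sq_mul_pow_le_betaC hε.le n
    _ ≤ ((1 - ε ^ 2)⁻¹) ^ 2 * ((2 : ℝ) ^ n)⁻¹ * (WC ε n k *ᵥ e ⬝ᵥ e) := by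
        gcongr
        exact betaC_mul_dotProduct_self_le hε.le n k e

theorem counterexample_testing_condition_general (ε : ℝ) (hε0 : 0 < ε) (hε1 : ε < 1)
    (n₀ k₀ : ℕ) (e : Fin 2 → ℝ) :
    (∑' p : ℕ × ℕ,
        if p.2 < 2 ^ p.1 ∧ dyad p.1 p.2 ⊆ dyad n₀ k₀ then
          ENNReal.ofReal (enorm2 (matSqrt (AC ε p.1 p.2) *ᵥ (WC ε p.1 p.2 *ᵥ e)) ^ 2)
        else 0) =
      (∑' p : ℕ × ℕ,
        if p.2 < 2 ^ p.1 ∧ dyad p.1 p.2 ⊆ dyad n₀ k₀ then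
          ENNReal.ofReal
            (((2 : ℝ) ^ p.1)⁻¹ * (betaC ε p.1 * (ε ^ (p.1 + 1))⁻¹) ^ 2 *
              dotp e (bC ε p.1 p.2) ^ 2)
        else 0) ∧
    (∑' p : ℕ × ℕ,
        if p.2 < 2 ^ p.1 ∧ dyad p.1 p.2 ⊆ dyad n₀ k₀ then
          ENNReal.ofReal (enorm2 (matSqrt (AC ε p.1 p.2) *ᵥ (WC ε p.1 p.2 *ᵥ e)) ^ 2)
        else 0) ≤
      ENNReal.ofReal
        (((1 - ε ^ 2)⁻¹) ^ 2 * ((2 : ℝ) ^ n₀)⁻¹ * dotp (WC ε n₀ k₀ *ᵥ e) e) := by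
  simp only [enorm2_matSqrt_AC_mulVec_WC_sq, dotp_eq_dotProduct, true_and]
  have hε2 : ε ^ 2 < 1 := by nlinarith
  have he : 0 ≤ e ⬝ᵥ e := by simpa using dotProduct_self_star_nonneg e
  calc _ ≤ ∑' p : ℕ × ℕ, if p.2 < 2 ^ p.1 ∧ dyad p.1 p.2 ⊆ dyad n₀ k₀ then
          ENNReal.ofReal (((2 : ℝ) ^ p.1)⁻¹ * (ε ^ 2) ^ p.1 * (ε ^ 2 * (e ⬝ᵥ e))) else 0 := by
        refine ENNReal.tsum_le_tsum fun p => ?_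
        split_ifs
        exacts [ENNReal.ofReal_le_ofReal (testing_term_le ε p.1 p.2 e), le_rfl]
    _ ≤ ∑' m, 2 ^ m * ENNReal.ofReal
          (((2 : ℝ) ^ (n₀ + m))⁻¹ * (ε ^ 2) ^ (n₀ + m) * (ε ^ 2 * (e ⬝ᵥ e))) :=
        tsum_ite_dyad_subset_le n₀ k₀ fun n =>
          ENNReal.ofReal (((2 : ℝ) ^ n)⁻¹ * (ε ^ 2) ^ n * (ε ^ 2 * (e ⬝ᵥ e)))
    _ = ENNReal.ofReal (((2 : ℝ) ^ n₀)⁻¹ * (ε ^ 2) ^ n₀ * (ε ^ 2 * (e ⬝ᵥ e)) * (1 - ε ^ 2)⁻¹) :=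
        tsum_two_pow_mul_ofReal_geometric (sq_nonneg ε) hε2 (mul_nonneg (sq_nonneg ε) he) n₀
    _ ≤ _ := ENNReal.ofReal_le_ofReal (geometric_bound_le_WC hε2 n₀ k₀ e)

/-- **Testing/Carleson condition for the counterexample.** For `ε ∈ (0,1)`, every dyadic
`K = dyad n₀ k₀` and every `e ∈ ℝ²`,
`Σ_{I∈𝒟(K)} |A_I^{1/2} W_I e|² = Σ_{I∈𝒟(K)} |I| (β_{n(I)} ε^{-(n(I)+1)})² ⟨e,b_I⟩²
  ≤ (1-ε²)^{-2} |K| ⟨W_K e, e⟩`. -/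
theorem counterexample_testing_condition (ε : ℝ) (hε0 : 0 < ε) (hε1 : ε < 1)
    (n₀ k₀ : ℕ) (hk₀ : k₀ < 2 ^ n₀) (e : Fin 2 → ℝ) :
    (∑' p : ℕ × ℕ,
        if p.2 < 2 ^ p.1 ∧ dyad p.1 p.2 ⊆ dyad n₀ k₀ then
          ENNReal.ofReal (enorm2 (matSqrt (AC ε p.1 p.2) *ᵥ (WC ε p.1 p.2 *ᵥ e)) ^ 2)
        else 0) =
      (∑' p : ℕ × ℕ,
        if p.2 < 2 ^ p.1 ∧ dyad p.1 p.2 ⊆ dyad n₀ k₀ then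
          ENNReal.ofReal
            (((2 : ℝ) ^ p.1)⁻¹ * (betaC ε p.1 * (ε ^ (p.1 + 1))⁻¹) ^ 2 *
              dotp e (bC ε p.1 p.2) ^ 2)
        else 0) ∧
    (∑' p : ℕ × ℕ,
        if p.2 < 2 ^ p.1 ∧ dyad p.1 p.2 ⊆ dyad n₀ k₀ then
          ENNReal.ofReal (enorm2 (matSqrt (AC ε p.1 p.2) *ᵥ (WC ε p.1 p.2 *ᵥ e)) ^ 2)
        else 0) ≤
      ENNReal.ofReal
        (((1 - ε ^ 2)⁻¹) ^ 2 * ((2 : ℝ) ^ n₀)⁻¹ * dotp (WC ε n₀ k₀ *ᵥ e) e) :=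
  counterexample_testing_condition_general ε hε0 hε1 n₀ k₀ e
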